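/- arXiv:1405.1643 — 3 statements merged into one kernel-verified Lean document; each statement's English description precedes it below -/
import Mathlib

section
/- Let Δ = {z ∈ ℂ : |z| < 1} and let σ : Δ → Δ be an anti-holomorphic involution, i.e. σ ∘ σ = id and the map z ↦ σ(conj(z)) is holomorphic on Δ. Then the fixed-point set {z ∈ Δ : σ(z) = z} is nonempty, connected, and has no isolated points. -/
/-!
The map `z ↦ σ (conj z)` is a holomorphic automorphism of the disk, so the Schwarz lemma, applied
to it and to its inverse after moving `σ 0` to `0`, shows `σ z = φ_{-p} (η * conj z)` with
`p = σ 0`, `‖η‖ = 1` and `φ_a z = (z - a) / (1 - conj a * z)`. As `σ` swaps `0` and `p`, it fixes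
some `b` in the disk; conjugating by `φ_b` gives an involution fixing `0`, hence of the form
`z ↦ μ ^ 2 * conj z`, whose fixed points form the diameter `μ • (-1, 1)`. The fixed-point set of
`σ` is therefore the image of an open interval under a continuous injective map.
-/

open Metric Set Filter Complex
open scoped ComplexConjugate Topology

theorem Preperfect.image_of_continuousOn_of_injOn {α β : Type*} [TopologicalSpace α]
    [TopologicalSpace β] {s : Set α} {f : α → β} (hs : Preperfect s) (hf : ContinuousOn f s)
    (hinj : InjOn f s) : Preperfect (f '' s) := by
  rintro _ ⟨x, hx, rfl⟩
  have hne : (𝓝[s \ {x}] x).NeBot := accPt_principal_iff_nhdsWithin.mp (hs x hx)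
  have hmap : Tendsto f (𝓝[s \ {x}] x) (𝓝[f '' s \ {f x}] (f x)) := by
    refine tendsto_nhdsWithin_iff.mpr ⟨(hf x hx).mono sdiff_subset, ?_⟩
    filter_upwards [self_mem_nhdsWithin] with y ⟨hys, hyx⟩
    exact ⟨mem_image_of_mem f hys, fun h => hyx (hinj hys hx h)⟩
  exact accPt_principal_iff_nhdsWithin.mpr hmap.neBot

theorem Set.InvOn.image_sep_eq {α : Type*} {f g σ : α → α} {s : Set α}
    (hinv : InvOn g f s s) (hf : MapsTo f s s) (hg : MapsTo g s s) (hσ : MapsTo σ s s) :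
    g '' {w ∈ s | f (σ (g w)) = w} = {z ∈ s | σ z = z} := by
  ext z
  constructor
  · rintro ⟨w, ⟨hw, hfix⟩, rfl⟩
    refine ⟨hg hw, ?_⟩
    rw [← hinv.1 (hσ (hg hw)), hfix]
  · rintro ⟨hz, hfix⟩
    exact ⟨f z, ⟨hf hz, by rw [hinv.1 hz, hfix]⟩, hinv.1 hz⟩

theorem conj_mem_ball_zero {z : ℂ} {r : ℝ} (hz : z ∈ ball (0 : ℂ) r) :
    conj z ∈ ball (0 : ℂ) r := by
  simpa using hz

theorem DifferentiableOn.conj_conj_ball {f : ℂ → ℂ} {r : ℝ}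
    (hf : DifferentiableOn ℂ f (ball 0 r)) :
    DifferentiableOn ℂ (fun z => conj (f (conj z))) (ball 0 r) := fun z hz => by
  have := (hf.differentiableAt (isOpen_ball.mem_nhds (conj_mem_ball_zero hz))).conj_conj
  rw [conj_conj] at this
  exact this.differentiableWithinAt

theorem sep_ball_sq_mul_conj_eq_self {μ : ℂ} (hμ : ‖μ‖ = 1) :
    {z ∈ ball (0 : ℂ) 1 | μ ^ 2 * conj z = z} = (fun x : ℝ => μ * x) '' Ioo (-1) 1 := by
  have hμμ : conj μ * μ = 1 := by
    rw [mul_comm, mul_conj, normSq_eq_norm_sq, hμ]; norm_num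
  ext z
  simp only [mem_ball_zero_iff, mem_image, mem_Ioo]
  constructor
  · rintro ⟨hz, hfix⟩
    obtain ⟨x, hx⟩ := conj_eq_iff_real.mp (show conj (conj μ * z) = conj μ * z by
      rw [map_mul, conj_conj]
      linear_combination (conj μ) * hfix - conj z * μ * hμμ)
    have hzx : z = μ * x := by linear_combination μ * hx - z * hμμ
    refine ⟨x, ?_, hzx.symm⟩
    rw [hzx, norm_mul, hμ, one_mul, norm_real, Real.norm_eq_abs] at hz
    exact abs_lt.mp hz
  · rintro ⟨x, hx, rfl⟩
    refine ⟨?_, ?_⟩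
    · rw [norm_mul, hμ, one_mul, norm_real, Real.norm_eq_abs]
      exact abs_lt.mpr hx
    · rw [map_mul, conj_ofReal]
      linear_combination μ * x * hμμ

noncomputable def diskMobius (a z : ℂ) : ℂ := (z - a) / (1 - conj a * z)

section diskMobius

variable {a z : ℂ}

theorem one_sub_conj_mul_ne_zero (ha : ‖a‖ < 1) (hz : ‖z‖ < 1) : 1 - conj a * z ≠ 0 := by
  have : ‖conj a * z‖ < 1 := by
    rw [norm_mul, norm_conj]
    exact mul_lt_one_of_nonneg_of_lt_one_left (norm_nonneg a) ha hz.le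
  intro h
  rw [sub_eq_zero] at h
  rw [← h, norm_one] at this
  exact lt_irrefl _ this

theorem normSq_one_sub_conj_mul_sub_normSq_sub (a z : ℂ) :
    normSq (1 - conj a * z) - normSq (z - a) = (1 - normSq a) * (1 - normSq z) := by
  simp only [normSq_apply, sub_re, sub_im, one_re, one_im, mul_re, mul_im, conj_re, conj_im]
  ring

theorem mapsTo_diskMobius (ha : ‖a‖ < 1) : MapsTo (diskMobius a) (ball 0 1) (ball 0 1) := by
  intro z hz
  rw [mem_ball_zero_iff] at hz ⊢
  have hd : 0 < ‖1 - conj a * z‖ := norm_pos_iff.mpr (one_sub_conj_mul_ne_zero ha hz)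
  rw [diskMobius, norm_div, div_lt_one hd, ← sq_lt_sq₀ (norm_nonneg _) hd.le,
    ← normSq_eq_norm_sq, ← normSq_eq_norm_sq, ← sub_pos, normSq_one_sub_conj_mul_sub_normSq_sub,
    normSq_eq_norm_sq, normSq_eq_norm_sq]
  exact mul_pos (sub_pos.mpr (pow_lt_one₀ (norm_nonneg a) ha two_ne_zero))
    (sub_pos.mpr (pow_lt_one₀ (norm_nonneg z) hz two_ne_zero))

theorem differentiableOn_diskMobius (ha : ‖a‖ < 1) :
    DifferentiableOn ℂ (diskMobius a) (ball 0 1) :=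
  ((differentiable_id.sub_const a).differentiableOn).div
    ((differentiable_const 1).sub (differentiable_id.const_mul _)).differentiableOn
    fun _ hz => one_sub_conj_mul_ne_zero ha (mem_ball_zero_iff.mp hz)

theorem leftInvOn_diskMobius_neg (ha : ‖a‖ < 1) :
    LeftInvOn (diskMobius (-a)) (diskMobius a) (ball 0 1) := by
  intro z hz
  have hw := mem_ball_zero_iff.mp (mapsTo_diskMobius ha hz)
  have hq : diskMobius a z * (1 - conj a * z) = z - a :=
    div_mul_cancel₀ _ (one_sub_conj_mul_ne_zero ha (mem_ball_zero_iff.mp hz))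
  rw [diskMobius, div_eq_iff (one_sub_conj_mul_ne_zero (by rwa [norm_neg]) hw), map_neg]
  linear_combination hq

theorem invOn_diskMobius_neg (ha : ‖a‖ < 1) :
    InvOn (diskMobius (-a)) (diskMobius a) (ball 0 1) (ball 0 1) :=
  ⟨leftInvOn_diskMobius_neg ha, by
    simpa using leftInvOn_diskMobius_neg (a := -a) (by rwa [norm_neg])⟩

@[simp]
theorem diskMobius_self : diskMobius a a = 0 := by simp [diskMobius]

@[simp]
theorem diskMobius_neg_zero : diskMobius (-a) 0 = a := by simp [diskMobius]

@[simp]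
theorem diskMobius_zero : diskMobius 0 z = z := by simp [diskMobius]

end diskMobius

section Curve

variable {a μ : ℂ}

theorem mapsTo_mul_ofReal_Ioo (hμ : ‖μ‖ = 1) :
    MapsTo (fun x : ℝ => μ * x) (Ioo (-1) 1) (ball 0 1) := by
  rw [mapsTo_iff_image_subset, ← sep_ball_sq_mul_conj_eq_self hμ]
  exact sep_subset _ _

theorem continuousOn_diskMobius_mul_ofReal (ha : ‖a‖ < 1) (hμ : ‖μ‖ = 1) :
    ContinuousOn (fun x : ℝ => diskMobius a (μ * x)) (Ioo (-1) 1) :=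
  (differentiableOn_diskMobius ha).continuousOn.comp
    (continuous_const.mul continuous_ofReal).continuousOn (mapsTo_mul_ofReal_Ioo hμ)

theorem injOn_diskMobius_mul_ofReal (ha : ‖a‖ < 1) (hμ : ‖μ‖ = 1) :
    InjOn (fun x : ℝ => diskMobius a (μ * x)) (Ioo (-1) 1) :=
  have hμ0 : μ ≠ 0 := norm_ne_zero_iff.mp (by rw [hμ]; exact one_ne_zero)
  (leftInvOn_diskMobius_neg ha).injOn.comp
    ((mul_right_injective₀ hμ0).comp ofReal_injective).injOn (mapsTo_mul_ofReal_Ioo hμ)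

end Curve

theorem exists_eq_mul_of_leftInvOn_of_map_zero {f g : ℂ → ℂ}
    (hf : DifferentiableOn ℂ f (ball 0 1)) (hg : DifferentiableOn ℂ g (ball 0 1))
    (hfm : MapsTo f (ball 0 1) (ball 0 1)) (hgm : MapsTo g (ball 0 1) (ball 0 1))
    (hgf : LeftInvOn g f (ball 0 1)) (hf0 : f 0 = 0) :
    ∃ η : ℂ, ‖η‖ = 1 ∧ EqOn f (η * ·) (ball 0 1) := by
  have hg0 : g 0 = 0 := by simpa [hf0] using hgf (mem_ball_self one_pos)
  -- Schwarz for `f` and for its left inverse `g` makes `f` norm-preserving.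
  have hnorm : ∀ z ∈ ball (0 : ℂ) 1, ‖f z‖ = ‖z‖ := fun z hz => by
    refine le_antisymm (norm_le_norm_of_mapsTo_ball hf
      (hfm.mono_right ball_subset_closedBall) hf0 (mem_ball_zero_iff.mp hz)) ?_
    calc ‖z‖ = ‖g (f z)‖ := by rw [hgf hz]
      _ ≤ ‖f z‖ := norm_le_norm_of_mapsTo_ball hg (hgm.mono_right ball_subset_closedBall) hg0
          (mem_ball_zero_iff.mp (hfm hz))
  have hhalf : (2⁻¹ : ℂ) ∈ ball (0 : ℂ) 1 := by rw [mem_ball_zero_iff]; norm_num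
  have hslope : ‖dslope f 0 2⁻¹‖ = 1 / 1 := by
    rw [dslope_of_ne _ (by norm_num), slope_def_module, hf0, sub_zero, sub_zero, norm_smul,
      hnorm _ hhalf, norm_inv, inv_mul_cancel₀ (by norm_num), div_one]
  obtain ⟨η, hη, hfη⟩ := affine_of_mapsTo_ball_of_exists_norm_dslope_eq_div' hf
    (by rw [hf0]; exact hfm.mono_right ball_subset_closedBall) ⟨_, hhalf, hslope⟩
  exact ⟨η, by simpa using hη, fun z hz => by simp [hfη hz, hf0, mul_comm]⟩

structure IsAntiholomorphicDiskInvolution (σ : ℂ → ℂ) : Prop where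
  mapsTo : MapsTo σ (ball 0 1) (ball 0 1)
  leftInvOn : LeftInvOn σ σ (ball 0 1)
  differentiableOn_comp_conj : DifferentiableOn ℂ (fun z => σ (conj z)) (ball 0 1)

namespace IsAntiholomorphicDiskInvolution

variable {σ : ℂ → ℂ}

theorem differentiableOn_conj_comp (hσ : IsAntiholomorphicDiskInvolution σ) :
    DifferentiableOn ℂ (fun z => conj (σ z)) (ball 0 1) := by
  simpa using hσ.differentiableOn_comp_conj.conj_conj_ball

theorem exists_eq_diskMobius_mul_conj (hσ : IsAntiholomorphicDiskInvolution σ) :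
    ∃ η : ℂ, ‖η‖ = 1 ∧ ∀ z ∈ ball (0 : ℂ) 1, σ z = diskMobius (-σ 0) (η * conj z) := by
  set p := σ 0
  have hp : ‖p‖ < 1 := mem_ball_zero_iff.mp (hσ.mapsTo (mem_ball_self one_pos))
  have hinv := invOn_diskMobius_neg hp
  obtain ⟨η, hη, hfη⟩ := exists_eq_mul_of_leftInvOn_of_map_zero
    (f := fun w => diskMobius p (σ (conj w))) (g := fun w => conj (σ (diskMobius (-p) w)))
    ((differentiableOn_diskMobius hp).comp hσ.differentiableOn_comp_conj
      (hσ.mapsTo.comp fun _ => conj_mem_ball_zero))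
    (hσ.differentiableOn_conj_comp.comp (differentiableOn_diskMobius (by rwa [norm_neg]))
      (mapsTo_diskMobius (by rwa [norm_neg])))
    ((mapsTo_diskMobius hp).comp (hσ.mapsTo.comp fun _ => conj_mem_ball_zero))
    (fun _ hw => conj_mem_ball_zero (hσ.mapsTo (mapsTo_diskMobius (by rwa [norm_neg]) hw)))
    (fun w hw => by
      simp only
      rw [hinv.1 (hσ.mapsTo (conj_mem_ball_zero hw)), hσ.leftInvOn (conj_mem_ball_zero hw),
        conj_conj])
    (by simp [p])
  refine ⟨η, hη, fun z hz => ?_⟩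
  have := hfη (conj_mem_ball_zero hz)
  simp only [conj_conj] at this
  rw [← this, hinv.1 (hσ.mapsTo hz)]

theorem exists_eq_mul_conj (hσ : IsAntiholomorphicDiskInvolution σ) (h0 : σ 0 = 0) :
    ∃ η : ℂ, ‖η‖ = 1 ∧ ∀ z ∈ ball (0 : ℂ) 1, σ z = η * conj z := by
  simpa [h0] using hσ.exists_eq_diskMobius_mul_conj

theorem exists_fixedPoint (hσ : IsAntiholomorphicDiskInvolution σ) :
    ∃ b ∈ ball (0 : ℂ) 1, σ b = b := by
  obtain ⟨η, hη, hση⟩ := hσ.exists_eq_diskMobius_mul_conj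
  set p := σ 0
  have hp0 : p ∈ ball (0 : ℂ) 1 := hσ.mapsTo (mem_ball_self one_pos)
  have hp : ‖-p‖ < 1 := by rw [norm_neg]; exact mem_ball_zero_iff.mp hp0
  have hηp : η * conj p = -p := by
    have h := hσ.leftInvOn (mem_ball_self one_pos)
    have hw : ‖η * conj p‖ < 1 := by rwa [norm_mul, hη, one_mul, norm_conj, ← norm_neg]
    rw [hση p hp0, diskMobius, div_eq_zero_iff] at h
    rcases h with h | h
    · linear_combination h
    · exact absurd h (one_sub_conj_mul_ne_zero hp hw)
  -- `σ` swaps `0` and `p`, so it fixes their hyperbolic midpoint `m`.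
  set r := Real.sqrt (1 - ‖p‖ ^ 2)
  have hr : r ^ 2 = 1 - ‖p‖ ^ 2 := Real.sq_sqrt (by nlinarith [norm_nonneg (-p), norm_neg p])
  have hr0 : (1 + r : ℂ) ≠ 0 := by exact_mod_cast (by positivity : (1 + r : ℝ) ≠ 0)
  set m : ℂ := p / (1 + r)
  have hm : ‖m‖ < 1 := by
    have h1r : ‖(1 + r : ℂ)‖ = 1 + r := by
      rw [← ofReal_one, ← ofReal_add, norm_real, Real.norm_of_nonneg (by positivity)]
    rw [norm_div, h1r, div_lt_one (by positivity)]
    linarith [Real.sqrt_nonneg (1 - ‖p‖ ^ 2), norm_neg p]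
  refine ⟨m, mem_ball_zero_iff.mpr hm, ?_⟩
  have hηm : η * conj m = -m := by
    simp only [m, map_div₀, map_add, map_one, conj_ofReal]
    rw [mul_div_assoc', hηp, neg_div]
  have hpp : conj p * p = 1 - (r : ℂ) ^ 2 := by
    have hr' : (r : ℂ) ^ 2 = 1 - (‖p‖ : ℂ) ^ 2 := by exact_mod_cast hr
    rw [mul_comm, mul_conj, normSq_eq_norm_sq]
    push_cast
    rw [hr']
    ring
  rw [hση m (mem_ball_zero_iff.mpr hm), hηm, diskMobius,
    div_eq_iff (one_sub_conj_mul_ne_zero hp (by rwa [norm_neg]))]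
  simp only [m, map_neg]
  field_simp
  linear_combination p * hpp

theorem comp_diskMobius (hσ : IsAntiholomorphicDiskInvolution σ) {b : ℂ} (hb : ‖b‖ < 1) :
    IsAntiholomorphicDiskInvolution (diskMobius b ∘ σ ∘ diskMobius (-b)) := by
  have hb' : ‖-b‖ < 1 := by rwa [norm_neg]
  have hinv := invOn_diskMobius_neg hb
  refine ⟨(mapsTo_diskMobius hb).comp (hσ.mapsTo.comp (mapsTo_diskMobius hb')),
    fun z hz => ?_, ?_⟩
  · simp only [Function.comp_apply]
    rw [hinv.1 (hσ.mapsTo (mapsTo_diskMobius hb' hz)), hσ.leftInvOn (mapsTo_diskMobius hb' hz),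
      hinv.2 hz]
  · have hk := (differentiableOn_diskMobius hb').conj_conj_ball
    have hkm : MapsTo (fun z => conj (diskMobius (-b) (conj z))) (ball 0 1) (ball 0 1) :=
      fun z hz => conj_mem_ball_zero (mapsTo_diskMobius hb' (conj_mem_ball_zero hz))
    simpa [Function.comp_def] using (differentiableOn_diskMobius hb).comp
      (hσ.differentiableOn_comp_conj.comp hk hkm)
      ((hσ.mapsTo.comp fun _ => conj_mem_ball_zero).comp hkm)

theorem exists_sep_eq_image_Ioo (hσ : IsAntiholomorphicDiskInvolution σ) :
    ∃ b : ℂ, ‖b‖ < 1 ∧ ∃ μ : ℂ, ‖μ‖ = 1 ∧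
      {z ∈ ball (0 : ℂ) 1 | σ z = z} = (fun x : ℝ => diskMobius b (μ * x)) '' Ioo (-1) 1 := by
  obtain ⟨b, hb, hσb⟩ := hσ.exists_fixedPoint
  have hb : ‖b‖ < 1 := mem_ball_zero_iff.mp hb
  have hb' : ‖-b‖ < 1 := by rwa [norm_neg]
  obtain ⟨η, hη, hτη⟩ := (hσ.comp_diskMobius hb).exists_eq_mul_conj (by simp [hσb])
  obtain ⟨μ, rfl⟩ := IsAlgClosed.exists_pow_nat_eq η two_pos
  have hμ : ‖μ‖ = 1 := by
    rwa [norm_pow, pow_eq_one_iff_of_nonneg (norm_nonneg μ) two_ne_zero] at hη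
  refine ⟨-b, hb', μ, hμ, ?_⟩
  rw [← (invOn_diskMobius_neg hb).image_sep_eq (mapsTo_diskMobius hb) (mapsTo_diskMobius hb')
    hσ.mapsTo, ← image_image (diskMobius (-b)) (fun x : ℝ => μ * x),
    ← sep_ball_sq_mul_conj_eq_self hμ]
  exact congrArg _ (sep_ext_iff.mpr fun w hw => by rw [← hτη w hw]; rfl)

end IsAntiholomorphicDiskInvolution

/-- The fixed-point set of an anti-holomorphic involution of the open unit
disk `Δ ⊂ ℂ` is nonempty, connected, and has no isolated points. -/
theorem fixedPointSet_of_antiholomorphic_involution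
    (σ : ℂ → ℂ)
    (hmaps : Set.MapsTo σ (Metric.ball 0 1) (Metric.ball 0 1))
    (hinv : ∀ z ∈ Metric.ball (0 : ℂ) 1, σ (σ z) = z)
    (hanti : DifferentiableOn ℂ (fun z => σ ((starRingEnd ℂ) z)) (Metric.ball 0 1))
    (F : Set ℂ) (hF : F = {z ∈ Metric.ball (0 : ℂ) 1 | σ z = z}) :
    F.Nonempty ∧ IsConnected F ∧ ∀ z ∈ F, AccPt z (Filter.principal F) := by
  obtain ⟨b, hb, μ, hμ, hFix⟩ :=
    (IsAntiholomorphicDiskInvolution.mk hmaps hinv hanti).exists_sep_eq_image_Ioo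
  rw [hFix] at hF
  subst hF
  have hcont := continuousOn_diskMobius_mul_ofReal hb hμ
  have hconn := (isConnected_Ioo (show (-1 : ℝ) < 1 by norm_num)).image _ hcont
  exact ⟨hconn.nonempty, hconn, isOpen_Ioo.preperfect.image_of_continuousOn_of_injOn hcont
    (injOn_diskMobius_mul_ofReal hb hμ)⟩
end

section
/- Under these hypotheses, every descending gradient curve of G along which G tends to 0 lands at a single point of E: if γ : [0, T) → Ω \ E is a maximal solution of the gradient-descent equation γ'(t) = −∇G(γ(t)) such that the infimum of G(γ(t)) over t ∈ [0, T) equals 0, then the limit of γ(t) as t → T exists and is a point of E. -/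
/-!
Along a descending gradient curve `(G ∘ γ)' = -‖∇G‖²`, so the AM-GM bound
`‖γ'‖ ≤ (1 + ‖γ'‖²) / 2` gives `‖γ s - γ t‖ ≤ h s - h t` for the increasing function
`h t = (t - G (γ t)) / 2`. Since `T` is finite and `G` is bounded below on the compact set
`closure Ω`, `h` is bounded, so `γ t` converges to some `q` as `t → T⁻`, and
`G q = inf (G ∘ γ) = 0`. Hence `q ∉ ∂Ω`, where `G = 1`. If `q` were in `Ω \ E`, the field `-∇G`
would be `C¹` near `q` and Picard–Lindelöf would continue `γ` past `T`, against maximality.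
-/

open Metric Set Complex Filter

/-- A real-valued function is harmonic on an open subset of `ℂ ≅ ℝ²` if it is
C² there and its Laplacian vanishes. -/
def IsHarmonicOn (G : ℂ → ℝ) (U : Set ℂ) : Prop :=
  ContDiffOn ℝ 2 G U ∧ ∀ z ∈ U,
    fderiv ℝ (fun w => fderiv ℝ G w 1) z 1 +
      fderiv ℝ (fun w => fderiv ℝ G w Complex.I) z Complex.I = 0

open scoped Topology

theorem norm_sub_le_of_hasDerivAt_of_hasDerivAt_neg_norm_sq {E : Type*} [NormedAddCommGroup E]
    [NormedSpace ℝ E] {γ v : ℝ → E} {g : ℝ → ℝ} {a b : ℝ} (hab : a ≤ b)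
    (hγ : ∀ u ∈ Icc a b, HasDerivAt γ (v u) u)
    (hg : ∀ u ∈ Icc a b, HasDerivAt g (-‖v u‖ ^ 2) u) :
    ‖γ b - γ a‖ ≤ (b - g b) / 2 - (a - g a) / 2 := by
  have hB : ∀ u ∈ Icc a b, HasDerivAt (fun u => (u - g u) / 2 - (a - g a) / 2)
      ((1 + ‖v u‖ ^ 2) / 2) u := fun u hu =>
    ((((hasDerivAt_id u).sub (hg u hu)).div_const 2).sub_const _).congr_deriv (by simp)
  have hAMGM : ∀ u ∈ Ico a b, ‖v u‖ ≤ (1 + ‖v u‖ ^ 2) / 2 := fun u _ => by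
    nlinarith [sq_nonneg (‖v u‖ - 1)]
  refine image_norm_le_of_norm_deriv_right_le_deriv_boundary' (f := fun u => γ u - γ a)
    (fun u hu => ((hγ u hu).continuousAt.sub continuousAt_const).continuousWithinAt)
    (fun u hu => ((hγ u (Ico_subset_Icc_self hu)).sub_const _).hasDerivWithinAt)
    (by simp) (fun u hu => (hB u hu).continuousAt.continuousWithinAt)
    (fun u hu => (hB u (Ico_subset_Icc_self hu)).hasDerivWithinAt) hAMGM (right_mem_Icc.2 hab)

theorem exists_tendsto_nhdsLT_of_norm_sub_le_sub {E : Type*} [SeminormedAddCommGroup E]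
    [CompleteSpace E] {γ : ℝ → E} {h : ℝ → ℝ} {a T : ℝ} (haT : a < T)
    (hγh : ∀ t ∈ Ico a T, ∀ s ∈ Ico a T, t ≤ s → ‖γ s - γ t‖ ≤ h s - h t)
    (hbdd : BddAbove (h '' Ico a T)) : ∃ q, Tendsto γ (𝓝[<] T) (𝓝 q) := by
  have hmono : MonotoneOn h (Ioo a T) := fun t ht s hs hts =>
    sub_nonneg.1 ((norm_nonneg _).trans (hγh t (Ioo_subset_Ico_self ht) s
      (Ioo_subset_Ico_self hs) hts))
  have hlim := hmono.tendsto_nhdsWithin_Ioo_left (nonempty_Ioo.2 haT)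
    (hbdd.mono (image_mono Ioo_subset_Ico_self))
  have hdist : ∀ t ∈ Ico a T, ∀ s ∈ Ico a T, dist (γ t) (γ s) ≤ dist (h t) (h s) := by
    intro t ht s hs
    rcases le_total t s with hts | hst
    · rw [dist_comm, dist_eq_norm, Real.dist_eq, abs_sub_comm]
      exact (hγh t ht s hs hts).trans (le_abs_self _)
    · rw [dist_eq_norm, Real.dist_eq]
      exact (hγh s hs t ht hst).trans (le_abs_self _)
  have hIco : ∀ᶠ p in 𝓝[<] T ×ˢ 𝓝[<] T, p.1 ∈ Ico a T ∧ p.2 ∈ Ico a T :=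
    prod_mem_prod (Ico_mem_nhdsLT haT) (Ico_mem_nhdsLT haT)
  have hcauchy : Cauchy (map γ (𝓝[<] T)) := by
    refine cauchy_map_iff'.2 (tendsto_uniformity_iff_dist_tendsto_zero.2 ?_)
    refine squeeze_zero' (Eventually.of_forall fun _ => dist_nonneg) ?_
      (tendsto_uniformity_iff_dist_tendsto_zero.1 (cauchy_map_iff'.1 hlim.cauchy_map))
    exact hIco.mono fun p hp => hdist _ hp.1 _ hp.2
  exact CompleteSpace.complete hcauchy

theorem AntitoneOn.sInf_image_Ico_eq_of_tendsto {g : ℝ → ℝ} {a T L : ℝ}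
    (hg : AntitoneOn g (Ico a T)) (haT : a < T) (hL : Tendsto g (𝓝[<] T) (𝓝 L)) :
    sInf (g '' Ico a T) = L := by
  have hLle : ∀ t ∈ Ico a T, L ≤ g t := fun t ht =>
    le_of_tendsto hL (mem_of_superset (Ioo_mem_nhdsLT ht.2) fun s hs =>
      hg ht ⟨ht.1.trans hs.1.le, hs.2⟩ hs.1.le)
  have hbdd : BddBelow (g '' Ico a T) := ⟨L, forall_mem_image.2 hLle⟩
  refine le_antisymm (ge_of_tendsto hL ?_) (le_csInf (nonempty_Ico.2 haT |>.image g)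
    (forall_mem_image.2 hLle))
  exact mem_of_superset (Ico_mem_nhdsLT haT) fun t ht => csInf_le hbdd (mem_image_of_mem g ht)

theorem ContDiffAt.gradient {F : Type*} [NormedAddCommGroup F] [InnerProductSpace ℝ F]
    [CompleteSpace F] {f : F → ℝ} {x : F} {n : WithTop ℕ∞}
    (hf : ContDiffAt ℝ (n + 1) f x) :
    ContDiffAt ℝ n (gradient f) x :=
  (InnerProductSpace.toDual ℝ F).symm.contDiff.contDiffAt.comp x (hf.fderiv_right le_rfl)

theorem hasDerivAt_ite_lt_of_tendsto_nhdsLT {E : Type*} [NormedAddCommGroup E]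
    [NormedSpace ℝ E] {v : E → E} {γ β : ℝ → E} {a T : ℝ} {q : E} (haT : a < T)
    (hv : ContinuousAt v q) (hγ : ∀ t ∈ Ioo a T, HasDerivAt γ (v (γ t)) t)
    (hq : Tendsto γ (𝓝[<] T) (𝓝 q)) (hβT : β T = q) (hβ : HasDerivAt β (v q) T) :
    HasDerivAt (fun t => if t < T then γ t else β t) (v q) T := by
  set Γ : ℝ → E := fun t => if t < T then γ t else β t
  have hΓγ : ∀ t < T, Γ =ᶠ[𝓝 t] γ := fun t ht =>
    eventuallyEq_of_mem (Iio_mem_nhds ht) fun s hs => if_pos hs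
  have hΓT : Γ T = q := (if_neg (lt_irrefl T)).trans hβT
  have hleft : HasDerivWithinAt Γ (v q) (Iic T) T := by
    refine hasDerivWithinAt_Iic_of_tendsto_deriv (s := Ioo a T)
      (fun t ht => ((hγ t ht).differentiableAt.congr_of_eventuallyEq
        (hΓγ t ht.2)).differentiableWithinAt) ?_ (Ioo_mem_nhdsLT haT) ?_
    · rw [ContinuousWithinAt, hΓT]
      exact (hq.congr' (eventually_nhdsWithin_of_forall fun t ht => (if_pos ht).symm)).mono_left
        (nhdsWithin_mono _ Ioo_subset_Iio_self)
    · refine (hv.tendsto.comp hq).congr' ?_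
      filter_upwards [Ioo_mem_nhdsLT haT] with t ht
      exact (((hγ t ht).congr_of_eventuallyEq (hΓγ t ht.2)).deriv).symm
  have hright : HasDerivWithinAt Γ (v q) (Ici T) T :=
    hβ.hasDerivWithinAt.congr (fun t ht => if_neg (not_lt.2 ht)) (if_neg (lt_irrefl T))
  simpa only [Iic_union_Ici, hasDerivWithinAt_univ] using hleft.union hright

theorem exists_hasDerivAt_extension_of_tendsto_nhdsLT {E : Type*} [NormedAddCommGroup E]
    [NormedSpace ℝ E] [CompleteSpace E] {v : E → E} {γ : ℝ → E} {U : Set E} {a T : ℝ}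
    {q : E} (haT : a < T) (hU : IsOpen U) (hqU : q ∈ U) (hv : ContDiffAt ℝ 1 v q)
    (hγ : ∀ t ∈ Ico a T, γ t ∈ U ∧ HasDerivAt γ (v (γ t)) t)
    (hq : Tendsto γ (𝓝[<] T) (𝓝 q)) :
    ∃ T' > T, ∃ Γ : ℝ → E, (∀ t ∈ Ico a T, Γ t = γ t) ∧
      ∀ t ∈ Ico a T', Γ t ∈ U ∧ HasDerivAt Γ (v (Γ t)) t := by
  obtain ⟨β, hβT, ε, hε, hβ⟩ :=
    hv.exists_forall_mem_closedBall_exists_eq_forall_mem_Ioo_hasDerivAt₀ T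
  have hβ_near : ∀ᶠ t in 𝓝 T, β t ∈ U ∧ HasDerivAt β (v (β t)) t := by
    have hode : ∀ᶠ t in 𝓝 T, HasDerivAt β (v (β t)) t :=
      mem_of_superset (Ioo_mem_nhds (by linarith) (by linarith)) hβ
    have hβU : ∀ᶠ t in 𝓝 T, β t ∈ U :=
      hode.self_of_nhds.continuousAt.eventually_mem (hβT ▸ hU.mem_nhds hqU)
    exact hβU.and hode
  obtain ⟨l, T', ⟨hlT, hTT'⟩, hsub⟩ := mem_nhds_iff_exists_Ioo_subset.1 hβ_near
  refine ⟨T', hTT', fun t => if t < T then γ t else β t, fun t ht => if_pos ht.2, ?_⟩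
  intro t ht
  rcases lt_trichotomy t T with htT | rfl | hTt
  · simp only [if_pos htT]
    exact ⟨(hγ t ⟨ht.1, htT⟩).1, (hγ t ⟨ht.1, htT⟩).2.congr_of_eventuallyEq
      (eventuallyEq_of_mem (Iio_mem_nhds htT) fun s hs => if_pos hs)⟩
  · simp only [lt_irrefl, if_false, hβT]
    refine ⟨hqU, hasDerivAt_ite_lt_of_tendsto_nhdsLT haT hv.continuousAt
      (fun s hs => (hγ s (Ioo_subset_Ico_self hs)).2) hq hβT ?_⟩
    simpa [hβT] using (hsub ⟨hlT, hTT'⟩).2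
  · simp only [if_neg (not_lt.2 hTt.le)]
    obtain ⟨hβU, hβode⟩ := hsub ⟨hlT.trans hTt, ht.2⟩
    exact ⟨hβU, hβode.congr_of_eventuallyEq
      (eventuallyEq_of_mem (Ioi_mem_nhds hTt) fun s hs => if_neg (not_lt.2 hs.le))⟩

section GradientFlow

variable {F : Type*} [NormedAddCommGroup F] [InnerProductSpace ℝ F] [CompleteSpace F]
  {f : F → ℝ} {γ : ℝ → F} {a T : ℝ}

theorem hasDerivAt_comp_of_hasDerivAt_neg_gradient {t : ℝ} (hf : DifferentiableAt ℝ f (γ t))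
    (hγ : HasDerivAt γ (-gradient f (γ t)) t) :
    HasDerivAt (f ∘ γ) (-‖gradient f (γ t)‖ ^ 2) t :=
  (hf.hasGradientAt.hasFDerivAt.comp_hasDerivAt t hγ).congr_deriv (by
    rw [InnerProductSpace.toDual_apply_apply, inner_neg_right, real_inner_self_eq_norm_sq])

theorem antitoneOn_comp_of_hasDerivAt_neg_gradient
    (hf : ∀ t ∈ Ico a T, DifferentiableAt ℝ f (γ t))
    (hγ : ∀ t ∈ Ico a T, HasDerivAt γ (-gradient f (γ t)) t) :
    AntitoneOn (f ∘ γ) (Ico a T) := by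
  have hderiv := fun t ht => hasDerivAt_comp_of_hasDerivAt_neg_gradient (hf t ht) (hγ t ht)
  refine antitoneOn_of_deriv_nonpos (convex_Ico a T)
    (fun t ht => (hderiv t ht).continuousAt.continuousWithinAt) ?_ ?_ <;>
    rw [interior_Ico] <;> intro t ht
  · exact (hderiv t (Ioo_subset_Ico_self ht)).differentiableAt.differentiableWithinAt
  · rw [(hderiv t (Ioo_subset_Ico_self ht)).deriv, neg_nonpos]
    positivity

theorem exists_tendsto_nhdsLT_of_hasDerivAt_neg_gradient (haT : a < T) {m : ℝ}
    (hf : ∀ t ∈ Ico a T, DifferentiableAt ℝ f (γ t))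
    (hγ : ∀ t ∈ Ico a T, HasDerivAt γ (-gradient f (γ t)) t)
    (hm : ∀ t ∈ Ico a T, m ≤ f (γ t)) : ∃ q, Tendsto γ (𝓝[<] T) (𝓝 q) := by
  refine exists_tendsto_nhdsLT_of_norm_sub_le_sub (h := fun u => (u - f (γ u)) / 2) haT
    (fun t ht s hs hts => ?_) ⟨(T - m) / 2, forall_mem_image.2 fun u hu => ?_⟩
  · have hsub : Icc t s ⊆ Ico a T := Icc_subset_Ico ht.1 hs.2
    exact norm_sub_le_of_hasDerivAt_of_hasDerivAt_neg_norm_sq hts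
      (fun u hu => hγ u (hsub hu)) fun u hu => by
        simpa only [norm_neg] using
          hasDerivAt_comp_of_hasDerivAt_neg_gradient (hf u (hsub hu)) (hγ u (hsub hu))
  · linarith [hm u hu, hu.2]

end GradientFlow

theorem gradient_curve_lands_at_point_of_E_general
    (Ω : Set ℂ) (hΩopen : IsOpen Ω) (hΩbdd : Bornology.IsBounded Ω)
    (E : Set ℂ) (hEcpt : IsCompact E)
    (G : ℂ → ℝ) (hGcont : ContinuousOn G (closure Ω))
    (hGbdry : ∀ z ∈ frontier Ω, G z = 1)
    (hGharm : IsHarmonicOn G (Ω \ E))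
    (T : ℝ) (hT : 0 < T) (γ : ℝ → ℂ)
    (hγmem : ∀ t ∈ Set.Ico (0 : ℝ) T, γ t ∈ Ω \ E)
    (hγode : ∀ t ∈ Set.Ico (0 : ℝ) T, HasDerivAt γ (-(gradient G (γ t))) t)
    (hinf : sInf ((fun t => G (γ t)) '' Set.Ico (0 : ℝ) T) = 0)
    (hmax : ∀ (T' : ℝ) (γ' : ℝ → ℂ), T < T' →
      (∀ t ∈ Set.Ico (0 : ℝ) T, γ' t = γ t) →
      (∀ t ∈ Set.Ico (0 : ℝ) T', γ' t ∈ Ω \ E ∧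
        HasDerivAt γ' (-(gradient G (γ' t))) t) → False) :
    ∃ p ∈ E, Filter.Tendsto γ (nhdsWithin T (Set.Iio T)) (nhds p) := by
  have hU : IsOpen (Ω \ E) := hΩopen.sdiff hEcpt.isClosed
  have hG : ∀ z ∈ Ω \ E, ContDiffAt ℝ 2 G z := fun z hz =>
    hGharm.1.contDiffAt (hU.mem_nhds hz)
  have hGγ : ∀ t ∈ Ico 0 T, DifferentiableAt ℝ G (γ t) := fun t ht =>
    (hG _ (hγmem t ht)).differentiableAt two_ne_zero
  have hγΩ : ∀ t ∈ Ico 0 T, γ t ∈ closure Ω := fun t ht => subset_closure (hγmem t ht).1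
  obtain ⟨m, hm⟩ := (hΩbdd.isCompact_closure.image_of_continuousOn hGcont).bddBelow
  obtain ⟨q, hq⟩ := exists_tendsto_nhdsLT_of_hasDerivAt_neg_gradient hT hGγ hγode
    fun t ht => hm (mem_image_of_mem G (hγΩ t ht))
  have hγΩ_ev : ∀ᶠ t in 𝓝[<] T, γ t ∈ closure Ω :=
    mem_of_superset (Ico_mem_nhdsLT hT) hγΩ
  have hq_cl : q ∈ closure Ω := isClosed_closure.mem_of_tendsto hq hγΩ_ev
  have hGq : G q = 0 := hinf ▸
    ((antitoneOn_comp_of_hasDerivAt_neg_gradient hGγ hγode).sInf_image_Ico_eq_of_tendsto hT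
      ((hGcont q hq_cl).tendsto.comp (tendsto_nhdsWithin_iff.2 ⟨hq, hγΩ_ev⟩))).symm
  have hqΩ : q ∈ Ω := by
    by_contra hq_not_mem
    have := hGbdry q ⟨hq_cl, by rwa [hΩopen.interior_eq]⟩
    linarith
  refine ⟨q, by_contra fun hqE => ?_, hq⟩
  obtain ⟨T', hT', Γ, hΓγ, hΓ⟩ := exists_hasDerivAt_extension_of_tendsto_nhdsLT hT hU
    ⟨hqΩ, hqE⟩ (hG q ⟨hqΩ, hqE⟩).gradient.neg
    (fun t ht => ⟨hγmem t ht, hγode t ht⟩) hq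
  exact hmax T' Γ hT' hΓγ hΓ

/-- **Landing of external rays (Theorem 7.2 (iii), analytic core).** Every
maximal descending gradient curve of the Green-type function `G` along which
`inf G = 0` lands at a single point of `E`. -/
theorem gradient_curve_lands_at_point_of_E
    (Ω : Set ℂ) (hΩopen : IsOpen Ω) (hΩbdd : Bornology.IsBounded Ω)
    (hΩsc : SimplyConnectedSpace Ω)
    (hΩconj : (fun z => (starRingEnd ℂ) z) '' Ω = Ω)
    (E : Set ℂ) (hEne : E.Nonempty) (hEcpt : IsCompact E)
    (hEsub : E ⊆ Ω) (hEreal : ∀ z ∈ E, z.im = 0)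
    (G : ℂ → ℝ) (hGcont : ContinuousOn G (closure Ω))
    (hGbdry : ∀ z ∈ frontier Ω, G z = 1)
    (hGzero : ∀ z ∈ E, G z = 0)
    (hGharm : IsHarmonicOn G (Ω \ E))
    (T : ℝ) (hT : 0 < T) (γ : ℝ → ℂ)
    (hγmem : ∀ t ∈ Set.Ico (0 : ℝ) T, γ t ∈ Ω \ E)
    (hγode : ∀ t ∈ Set.Ico (0 : ℝ) T, HasDerivAt γ (-(gradient G (γ t))) t)
    (hinf : sInf ((fun t => G (γ t)) '' Set.Ico (0 : ℝ) T) = 0)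
    (hmax : ∀ (T' : ℝ) (γ' : ℝ → ℂ), T < T' →
      (∀ t ∈ Set.Ico (0 : ℝ) T, γ' t = γ t) →
      (∀ t ∈ Set.Ico (0 : ℝ) T', γ' t ∈ Ω \ E ∧
        HasDerivAt γ' (-(gradient G (γ' t))) t) → False) :
    ∃ p ∈ E, Filter.Tendsto γ (nhdsWithin T (Set.Iio T)) (nhds p) :=
  gradient_curve_lands_at_point_of_E_general Ω hΩopen hΩbdd E hEcpt G hGcont hGbdry hGharm T hT γ
    hγmem hγode hinf hmax
end

section
/- R is an equivalence relation on X, and R is a closed subset of X × X in the product topology. -/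
/-
Transitivity only needs the paired points `σⁿ x*`, `σⁿ y*` to be pairwise distinct.
For closedness, `σⁿ x*` and `σⁿ y*` differ at the single coordinate `-n`, so
`R = ⋂ₖ ({(u, v) | u k = v k} ∪ {(σ⁻ᵏ x*, σ⁻ᵏ y*), (σ⁻ᵏ y*, σ⁻ᵏ x*)})`, an intersection
of closed sets.
-/

open Set Function

/-- The shift by `n` on the full two-sided 2-shift `{a,b}^ℤ ≅ (ℤ → Bool)`:
`(σⁿ x)(m) = x(m + n)`. -/
def shiftZ (n : ℤ) (x : ℤ → Bool) : ℤ → Bool := fun m => x (m + n)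

/-- The sequence `… a b a b a …` written `\overline{a}bab\overline{a}`:
symbol `b` exactly at positions `-1` and `1`. -/
def xstar : ℤ → Bool := fun n => decide (n = -1 ∨ n = 1)

/-- The sequence `… a b b b a …` written `\overline{a}bbb\overline{a}`:
symbol `b` exactly at positions `-1`, `0` and `1`. -/
def ystar : ℤ → Bool := fun n => decide (n = -1 ∨ n = 0 ∨ n = 1)

/-- The identification `\overline{a}bab\overline{a} ∼ \overline{a}bbb\overline{a}`
together with all its shifts, as a relation on the shift space. -/
def Rrel : Set ((ℤ → Bool) × (ℤ → Bool)) :=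
  {p | p.1 = p.2} ∪
    {p | ∃ n : ℤ, p.1 = shiftZ n xstar ∧ p.2 = shiftZ n ystar} ∪
    {p | ∃ n : ℤ, p.1 = shiftZ n ystar ∧ p.2 = shiftZ n xstar}

section PairIdentification

variable {α ι : Type*}

def pairIdentification (f g : ι → α) : Set (α × α) :=
  {p | p.1 = p.2} ∪ {p | ∃ i, p.1 = f i ∧ p.2 = g i} ∪ {p | ∃ i, p.1 = g i ∧ p.2 = f i}

theorem mem_pairIdentification {f g : ι → α} {a b : α} :
    (a, b) ∈ pairIdentification f g ↔
      (a = b ∨ ∃ i, a = f i ∧ b = g i) ∨ ∃ i, a = g i ∧ b = f i :=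
  Iff.rfl

theorem equivalence_pairIdentification {f g : ι → α} (hf : Injective f) (hg : Injective g)
    (hfg : ∀ i j, f i ≠ g j) : Equivalence fun a b => (a, b) ∈ pairIdentification f g where
  refl _ := Or.inl (Or.inl rfl)
  symm := by
    simp only [mem_pairIdentification]
    rintro a b ((rfl | ⟨i, rfl, rfl⟩) | ⟨i, rfl, rfl⟩)
    · exact Or.inl (Or.inl rfl)
    · exact Or.inr ⟨i, rfl, rfl⟩
    · exact Or.inl (Or.inr ⟨i, rfl, rfl⟩)
  trans := by
    simp only [mem_pairIdentification]
    rintro a b c ((rfl | ⟨i, rfl, rfl⟩) | ⟨i, rfl, rfl⟩) hbc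
    · exact hbc
    · rcases hbc with (rfl | ⟨j, hj, rfl⟩) | ⟨j, hj, rfl⟩
      · exact Or.inl (Or.inr ⟨i, rfl, rfl⟩)
      · exact absurd hj.symm (hfg j i)
      · obtain rfl := hg hj
        exact Or.inl (Or.inl rfl)
    · rcases hbc with (rfl | ⟨j, hj, rfl⟩) | ⟨j, hj, rfl⟩
      · exact Or.inr ⟨i, rfl, rfl⟩
      · obtain rfl := hf hj
        exact Or.inl (Or.inl rfl)
      · exact absurd hj (hfg i j)

end PairIdentification

theorem apply_eq_of_shiftZ_eq {n m : ℤ} {x y : ℤ → Bool} (h : shiftZ n x = shiftZ m y) (t : ℤ) :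
    x t = y (t + (m - n)) := by
  simpa [shiftZ, add_comm_sub] using congrFun h (t - n)

theorem shiftZ_xstar_injective : Injective fun n => shiftZ n xstar := by
  intro n m h
  have h₁ := apply_eq_of_shiftZ_eq h 1
  have h₂ := apply_eq_of_shiftZ_eq h (-1)
  grind [xstar]

theorem shiftZ_ystar_injective : Injective fun n => shiftZ n ystar := by
  intro n m h
  have h₁ := apply_eq_of_shiftZ_eq h 1
  have h₂ := apply_eq_of_shiftZ_eq h (-1)
  grind [ystar]

theorem shiftZ_xstar_ne_shiftZ_ystar (n m : ℤ) : shiftZ n xstar ≠ shiftZ m ystar := by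
  intro h
  have h₁ := apply_eq_of_shiftZ_eq h 1
  have h₂ := apply_eq_of_shiftZ_eq h 0
  have h₃ := apply_eq_of_shiftZ_eq h (-1)
  grind [xstar, ystar]

theorem shiftZ_xstar_apply_ne_iff {n k : ℤ} :
    shiftZ n xstar k ≠ shiftZ n ystar k ↔ k = -n := by
  simp only [shiftZ, xstar, ystar, ne_eq, decide_eq_decide]
  omega

theorem Rrel_eq_pairIdentification :
    Rrel = pairIdentification (fun n => shiftZ n xstar) (fun n => shiftZ n ystar) := rfl

theorem eq_of_mem_Rrel_of_apply_ne {u v : ℤ → Bool} {k : ℤ} (huv : (u, v) ∈ Rrel)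
    (hk : u k ≠ v k) :
    (u, v) = (shiftZ (-k) xstar, shiftZ (-k) ystar) ∨
      (u, v) = (shiftZ (-k) ystar, shiftZ (-k) xstar) := by
  rw [Rrel_eq_pairIdentification, mem_pairIdentification] at huv
  rcases huv with (rfl | ⟨n, rfl, rfl⟩) | ⟨n, rfl, rfl⟩
  · exact absurd rfl hk
  · obtain rfl : k = -n := shiftZ_xstar_apply_ne_iff.mp hk
    simp
  · obtain rfl : k = -n := shiftZ_xstar_apply_ne_iff.mp (Ne.symm hk)
    simp

theorem Rrel_eq_iInter :
    Rrel = ⋂ k : ℤ, {p | p.1 k = p.2 k} ∪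
      {(shiftZ (-k) xstar, shiftZ (-k) ystar), (shiftZ (-k) ystar, shiftZ (-k) xstar)} := by
  ext ⟨u, v⟩
  simp only [mem_iInter, mem_union, mem_ofPred_eq, mem_insert_iff, mem_singleton_iff]
  constructor
  · intro huv k
    by_cases hk : u k = v k
    · exact Or.inl hk
    · exact Or.inr (eq_of_mem_Rrel_of_apply_ne huv hk)
  · intro h
    by_cases huv : u = v
    · exact Or.inl (Or.inl huv)
    obtain ⟨k, hk⟩ := Function.ne_iff.mp huv
    rcases (h k).resolve_left hk with hxy | hyx
    · exact Or.inl (Or.inr ⟨-k, congrArg Prod.fst hxy, congrArg Prod.snd hxy⟩)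
    · exact Or.inr ⟨-k, congrArg Prod.fst hyx, congrArg Prod.snd hyx⟩

theorem isClosed_Rrel : IsClosed Rrel := by
  rw [Rrel_eq_iInter]
  refine isClosed_iInter fun k => IsClosed.union ?_ (toFinite _).isClosed
  exact isClosed_eq ((continuous_apply k).comp continuous_fst)
    ((continuous_apply k).comp continuous_snd)

/-- `Rrel` is an equivalence relation on `{a,b}^ℤ` and is closed in the
product topology. -/
theorem Rrel_equivalence_and_closed :
    Equivalence (fun u v : ℤ → Bool => (u, v) ∈ Rrel) ∧ IsClosed Rrel :=
  ⟨Rrel_eq_pairIdentification ▸ equivalence_pairIdentification shiftZ_xstar_injective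
      shiftZ_ystar_injective shiftZ_xstar_ne_shiftZ_ystar,
    isClosed_Rrel⟩
end
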